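/- arXiv:0801.0452 — 4 statements merged into one kernel-verified Lean document; each statement's English description precedes it below -/
import Mathlib

section
/- Let h be a nonzero real number and P ≥ 0. There exist η > 0 and ρ ∈ [0,1] satisfying both |h|·η ≤ √(1-ρ²) (the useful-genie condition) and η·ρ = 1 + h²P (the smart-genie condition) if and only if |h + h³P| ≤ 1/2. -/
/-- For the symmetric Gaussian interference channel with interference coefficient `h ≠ 0`
and power `P ≥ 0`, there exist `η > 0` and `ρ ∈ [0,1]` satisfying the useful-genie
condition `|h|·η ≤ √(1-ρ²)` and the smart-genie condition `η·ρ = 1 + h²P`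
if and only if `|h + h³P| ≤ 1/2`. -/
theorem useful_smart_genie_exists_iff (h P : ℝ) (hh : h ≠ 0) (hP : 0 ≤ P) :
    (∃ η > (0 : ℝ), ∃ ρ ∈ Set.Icc (0 : ℝ) 1,
        |h| * η ≤ Real.sqrt (1 - ρ ^ 2) ∧ η * ρ = 1 + h ^ 2 * P) ↔
      |h + h ^ 3 * P| ≤ 1 / 2 := by
  have hc : (0:ℝ) < 1 + h ^ 2 * P := by nlinarith [sq_nonneg h, pow_pos (abs_pos.mpr hh) 2, sq_abs h]
  have habs : |h + h ^ 3 * P| = |h| * (1 + h ^ 2 * P) := by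
    rw [show h + h ^ 3 * P = h * (1 + h ^ 2 * P) by ring, abs_mul, abs_of_pos hc]
  rw [habs]
  constructor
  · rintro ⟨η, hη, ρ, ⟨hρ0, hρ1⟩, h1, h2⟩
    have hρpos : 0 < ρ := by
      rcases lt_or_eq_of_le hρ0 with h' | h'
      · exact h'
      · exfalso; rw [← h'] at h2; simp at h2; nlinarith
    have hsq : Real.sqrt (1 - ρ ^ 2) ^ 2 = 1 - ρ ^ 2 :=
      Real.sq_sqrt (by nlinarith)
    have hs0 : 0 ≤ Real.sqrt (1 - ρ ^ 2) := Real.sqrt_nonneg _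
    have habs0 : 0 ≤ |h| := abs_nonneg h
    nlinarith [mul_le_mul_of_nonneg_right h1 hρ0,
      mul_nonneg hs0 hρ0, sq_nonneg (ρ ^ 2 - 1 / 2),
      sq_nonneg (Real.sqrt (1 - ρ ^ 2) * ρ - 1 / 2)]
  · intro hle
    have hs2 : Real.sqrt 2 ^ 2 = 2 := Real.sq_sqrt (by norm_num)
    have hs2pos : 0 < Real.sqrt 2 := Real.sqrt_pos.mpr (by norm_num)
    refine ⟨Real.sqrt 2 * (1 + h ^ 2 * P), by positivity, Real.sqrt 2 / 2,
      ⟨by positivity, by nlinarith⟩, ?_, by nlinarith⟩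
    have hval : 1 - (Real.sqrt 2 / 2) ^ 2 = (Real.sqrt 2 / 2) ^ 2 := by nlinarith
    rw [hval, Real.sqrt_sq (by positivity)]
    nlinarith [abs_nonneg h, mul_le_mul_of_nonneg_right hle hs2pos.le]
end

section
/- For real numbers a ≥ 0 and b ≥ 0, there exist ρ₁, ρ₂ ∈ [0,1] with a ≤ ρ₂·√(1-ρ₁²) and b ≤ ρ₁·√(1-ρ₂²) if and only if a + b ≤ 1. -/
/-- For real `a, b ≥ 0`, there exist `ρ₁, ρ₂ ∈ [0,1]` with `a ≤ ρ₂·√(1-ρ₁²)` and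
`b ≤ ρ₁·√(1-ρ₂²)` if and only if `a + b ≤ 1`. -/
theorem exists_rho_pair_iff_add_le_one (a b : ℝ) (ha : 0 ≤ a) (hb : 0 ≤ b) :
    (∃ ρ₁ ∈ Set.Icc (0 : ℝ) 1, ∃ ρ₂ ∈ Set.Icc (0 : ℝ) 1,
        a ≤ ρ₂ * Real.sqrt (1 - ρ₁ ^ 2) ∧ b ≤ ρ₁ * Real.sqrt (1 - ρ₂ ^ 2)) ↔
      a + b ≤ 1 := by
  constructor
  · rintro ⟨ρ₁, ⟨h1l, h1u⟩, ρ₂, ⟨h2l, h2u⟩, hA, hB⟩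
    set s := Real.sqrt (1 - ρ₁ ^ 2) with hs
    set t := Real.sqrt (1 - ρ₂ ^ 2) with ht
    have hs0 : 0 ≤ s := Real.sqrt_nonneg _
    have ht0 : 0 ≤ t := Real.sqrt_nonneg _
    have hs2 : s ^ 2 = 1 - ρ₁ ^ 2 := Real.sq_sqrt (by nlinarith)
    have ht2 : t ^ 2 = 1 - ρ₂ ^ 2 := Real.sq_sqrt (by nlinarith)
    have key : ρ₂ * s + ρ₁ * t ≤ 1 := by
      nlinarith [sq_nonneg (ρ₂ * t - ρ₁ * s), sq_nonneg (ρ₁ ^ 2 + ρ₂ ^ 2 - 1),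
        sq_nonneg (ρ₂ * s + ρ₁ * t), mul_nonneg (mul_nonneg h2l hs0) (mul_nonneg h1l ht0)]
    linarith
  · intro hab
    have hb1 : b ≤ 1 := by linarith
    refine ⟨Real.sqrt b, ⟨Real.sqrt_nonneg _, Real.sqrt_le_one.mpr hb1⟩,
      Real.sqrt (1 - b), ⟨Real.sqrt_nonneg _, Real.sqrt_le_one.mpr (by linarith)⟩, ?_, ?_⟩
    · have h1 : Real.sqrt b ^ 2 = b := Real.sq_sqrt hb
      rw [h1]
      have : Real.sqrt (1 - b) * Real.sqrt (1 - b) = 1 - b :=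
        Real.mul_self_sqrt (by linarith)
      calc a ≤ 1 - b := by linarith
        _ = Real.sqrt (1 - b) * Real.sqrt (1 - b) := this.symm
    · have h1 : Real.sqrt (1 - b) ^ 2 = 1 - b := Real.sq_sqrt (by linarith)
      rw [h1]
      have : (1 : ℝ) - (1 - b) = b := by ring
      rw [this, Real.mul_self_sqrt hb]
end

section
/- Let h₁₂, h₂₁ be nonzero real numbers and P₁, P₂ ≥ 0. There exist η₁, η₂ > 0 and ρ₁, ρ₂ ∈ [0,1] satisfying |h₂₁|·η₁ ≤ √(1-ρ₂²), |h₁₂|·η₂ ≤ √(1-ρ₁²), η₁·ρ₁ = 1 + h₁₂²P₂, and η₂·ρ₂ = 1 + h₂₁²P₁ if and only if |h₁₂|·(1 + h₂₁²P₁) + |h₂₁|·(1 + h₁₂²P₂) ≤ 1. -/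
set_option maxHeartbeats 1000000


/-- For the asymmetric Gaussian interference channel with nonzero cross coefficients
`h₁₂, h₂₁` and powers `P₁, P₂ ≥ 0`, there exist `η₁, η₂ > 0` and `ρ₁, ρ₂ ∈ [0,1]`
satisfying the useful-genie conditions `|h₂₁|·η₁ ≤ √(1-ρ₂²)`, `|h₁₂|·η₂ ≤ √(1-ρ₁²)`
and the smart-genie conditions `η₁·ρ₁ = 1 + h₁₂²P₂`, `η₂·ρ₂ = 1 + h₂₁²P₁`
if and only if `|h₁₂|·(1 + h₂₁²P₁) + |h₂₁|·(1 + h₁₂²P₂) ≤ 1`. -/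
theorem useful_smart_genie_exists_iff_asym (h₁₂ h₂₁ P₁ P₂ : ℝ)
    (hh₁₂ : h₁₂ ≠ 0) (hh₂₁ : h₂₁ ≠ 0) (hP₁ : 0 ≤ P₁) (hP₂ : 0 ≤ P₂) :
    (∃ η₁ > (0 : ℝ), ∃ η₂ > (0 : ℝ), ∃ ρ₁ ∈ Set.Icc (0 : ℝ) 1, ∃ ρ₂ ∈ Set.Icc (0 : ℝ) 1,
        |h₂₁| * η₁ ≤ Real.sqrt (1 - ρ₂ ^ 2) ∧
        |h₁₂| * η₂ ≤ Real.sqrt (1 - ρ₁ ^ 2) ∧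
        η₁ * ρ₁ = 1 + h₁₂ ^ 2 * P₂ ∧
        η₂ * ρ₂ = 1 + h₂₁ ^ 2 * P₁) ↔
      |h₁₂| * (1 + h₂₁ ^ 2 * P₁) + |h₂₁| * (1 + h₁₂ ^ 2 * P₂) ≤ 1 := by
  have ha : (0:ℝ) < |h₁₂| := abs_pos.mpr hh₁₂
  have hb : (0:ℝ) < |h₂₁| := abs_pos.mpr hh₂₁
  set a := |h₁₂| with ha'
  set b := |h₂₁| with hb'
  set A : ℝ := 1 + h₂₁ ^ 2 * P₁ with hA'
  set B : ℝ := 1 + h₁₂ ^ 2 * P₂ with hB'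
  have hA1 : (1:ℝ) ≤ A := by
    have : 0 ≤ h₂₁ ^ 2 * P₁ := by positivity
    linarith
  have hB1 : (1:ℝ) ≤ B := by
    have : 0 ≤ h₁₂ ^ 2 * P₂ := by positivity
    linarith
  constructor
  · rintro ⟨η₁, hη₁, η₂, hη₂, ρ₁, ⟨hρ₁0, hρ₁1⟩, ρ₂, ⟨hρ₂0, hρ₂1⟩, h1, h2, h3, h4⟩
    have hρ₁pos : 0 < ρ₁ := by nlinarith
    have hρ₂pos : 0 < ρ₂ := by nlinarith
    set s₁ := Real.sqrt (1 - ρ₁ ^ 2) with hs₁'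
    set s₂ := Real.sqrt (1 - ρ₂ ^ 2) with hs₂'
    have hs₁0 : 0 ≤ s₁ := Real.sqrt_nonneg _
    have hs₂0 : 0 ≤ s₂ := Real.sqrt_nonneg _
    have hs₁sq : s₁ ^ 2 = 1 - ρ₁ ^ 2 := Real.sq_sqrt (by nlinarith)
    have hs₂sq : s₂ ^ 2 = 1 - ρ₂ ^ 2 := Real.sq_sqrt (by nlinarith)
    -- b * B ≤ ρ₁ * s₂ and a * A ≤ ρ₂ * s₁
    have hu : b * B ≤ ρ₁ * s₂ := by
      have := mul_le_mul_of_nonneg_left h1 hρ₁0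
      calc b * B = ρ₁ * (b * η₁) := by rw [← h3]; ring
        _ ≤ ρ₁ * s₂ := this
    have hv : a * A ≤ ρ₂ * s₁ := by
      have := mul_le_mul_of_nonneg_left h2 hρ₂0
      calc a * A = ρ₂ * (a * η₂) := by rw [← h4]; ring
        _ ≤ ρ₂ * s₁ := this
    have hT : ρ₁ * s₂ + ρ₂ * s₁ ≤ 1 := by
      nlinarith [sq_nonneg (s₁ * s₂ - ρ₁ * ρ₂), sq_nonneg (ρ₁ * s₂ + ρ₂ * s₁),
        mul_nonneg (mul_nonneg hρ₁0 hs₂0) (mul_nonneg hρ₂0 hs₁0)]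
    linarith
  · intro hsum
    set u := b * B with hu'
    set v := a * A with hv'
    have hupos : 0 < u := by positivity
    have hvpos : 0 < v := by positivity
    have huv1 : u + v ≤ 1 := by linarith
    have h1le : u + v ≤ 1 := huv1
    have h1ge : -1 ≤ u + v := by linarith
    have h2le : u - v ≤ 1 := by linarith
    have h2ge : -1 ≤ u - v := by linarith
    set θ := Real.arcsin (u + v) with hθ'
    set φ := Real.arcsin (u - v) with hφ'
    have hθmem : θ ∈ Set.Icc (-(Real.pi/2)) (Real.pi/2) := Real.arcsin_mem_Icc _
    have hφmem : φ ∈ Set.Icc (-(Real.pi/2)) (Real.pi/2) := Real.arcsin_mem_Icc _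
    have hθnn : 0 ≤ θ := Real.arcsin_nonneg.mpr (by linarith)
    have hφleθ : φ ≤ θ := Real.monotone_arcsin (by linarith)
    have hnegθleφ : -θ ≤ φ := by
      have : Real.arcsin (-(u+v)) ≤ φ := Real.monotone_arcsin (by linarith)
      rwa [Real.arcsin_neg] at this
    set θ₁ := (θ + φ) / 2 with hθ₁'
    set θ₂ := (θ - φ) / 2 with hθ₂'
    have hθ₁mem : θ₁ ∈ Set.Icc (-(Real.pi/2)) (Real.pi/2) := by
      constructor
      · have := hθmem.1; have := hφmem.1
        have h := Real.pi_pos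
        simp only [hθ₁']; linarith
      · have := hθmem.2; have := hφmem.2
        simp only [hθ₁']; linarith
    have hθ₂mem : θ₂ ∈ Set.Icc (-(Real.pi/2)) (Real.pi/2) := by
      constructor
      · have := hθmem.1; have := hφmem.2
        have h := Real.pi_pos
        simp only [hθ₂']; linarith
      · have := hθmem.2; have := hφmem.1
        simp only [hθ₂']; linarith
    have hθ₁nn : 0 ≤ θ₁ := by simp only [hθ₁']; linarith
    have hθ₂nn : 0 ≤ θ₂ := by simp only [hθ₂']; linarith
    have hcos₁ : 0 ≤ Real.cos θ₁ := Real.cos_nonneg_of_mem_Icc hθ₁mem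
    have hcos₂ : 0 ≤ Real.cos θ₂ := Real.cos_nonneg_of_mem_Icc hθ₂mem
    have hsin₁nn : 0 ≤ Real.sin θ₁ := by
      apply Real.sin_nonneg_of_nonneg_of_le_pi hθ₁nn
      have := hθ₁mem.2; have h := Real.pi_pos; linarith
    have hsin₂nn : 0 ≤ Real.sin θ₂ := by
      apply Real.sin_nonneg_of_nonneg_of_le_pi hθ₂nn
      have := hθ₂mem.2; have h := Real.pi_pos; linarith
    have hsum12 : θ₁ + θ₂ = θ := by simp only [hθ₁', hθ₂']; ring
    have hdiff12 : θ₁ - θ₂ = φ := by simp only [hθ₁', hθ₂']; ring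
    have hsinθ : Real.sin θ = u + v := Real.sin_arcsin h1ge h1le
    have hsinφ : Real.sin φ = u - v := Real.sin_arcsin h2ge h2le
    have key1 : Real.sin θ₁ * Real.cos θ₂ = u := by
      have e1 : Real.sin (θ₁ + θ₂) = Real.sin θ₁ * Real.cos θ₂ + Real.cos θ₁ * Real.sin θ₂ :=
        Real.sin_add θ₁ θ₂
      have e2 : Real.sin (θ₁ - θ₂) = Real.sin θ₁ * Real.cos θ₂ - Real.cos θ₁ * Real.sin θ₂ :=
        Real.sin_sub θ₁ θ₂
      rw [hsum12, hsinθ] at e1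
      rw [hdiff12, hsinφ] at e2
      linarith
    have key2 : Real.cos θ₁ * Real.sin θ₂ = v := by
      have e1 : Real.sin (θ₁ + θ₂) = Real.sin θ₁ * Real.cos θ₂ + Real.cos θ₁ * Real.sin θ₂ :=
        Real.sin_add θ₁ θ₂
      have e2 : Real.sin (θ₁ - θ₂) = Real.sin θ₁ * Real.cos θ₂ - Real.cos θ₁ * Real.sin θ₂ :=
        Real.sin_sub θ₁ θ₂
      rw [hsum12, hsinθ] at e1
      rw [hdiff12, hsinφ] at e2
      linarith
    have hsin₁pos : 0 < Real.sin θ₁ := by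
      rcases hsin₁nn.lt_or_eq with h | h
      · exact h
      · exfalso; rw [← h] at key1; simp at key1; nlinarith
    have hsin₂pos : 0 < Real.sin θ₂ := by
      rcases hsin₂nn.lt_or_eq with h | h
      · exact h
      · exfalso; rw [← h] at key2; simp at key2; nlinarith
    have hcos₂pos : 0 < Real.cos θ₂ := by
      rcases hcos₂.lt_or_eq with h | h
      · exact h
      · exfalso; rw [← h] at key1; simp at key1; nlinarith
    have hcos₁pos : 0 < Real.cos θ₁ := by
      rcases hcos₁.lt_or_eq with h | h
      · exact h
      · exfalso; rw [← h] at key2; simp at key2; nlinarith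
    have hsqrt1 : Real.sqrt (1 - Real.sin θ₁ ^ 2) = Real.cos θ₁ := by
      rw [show 1 - Real.sin θ₁ ^ 2 = Real.cos θ₁ ^ 2 by
        have := Real.sin_sq_add_cos_sq θ₁; linarith]
      exact Real.sqrt_sq hcos₁
    have hsqrt2 : Real.sqrt (1 - Real.sin θ₂ ^ 2) = Real.cos θ₂ := by
      rw [show 1 - Real.sin θ₂ ^ 2 = Real.cos θ₂ ^ 2 by
        have := Real.sin_sq_add_cos_sq θ₂; linarith]
      exact Real.sqrt_sq hcos₂
    refine ⟨B / Real.sin θ₁, by positivity, A / Real.sin θ₂, by positivity,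
      Real.sin θ₁, ⟨hsin₁nn, Real.sin_le_one θ₁⟩,
      Real.sin θ₂, ⟨hsin₂nn, Real.sin_le_one θ₂⟩, ?_, ?_, ?_, ?_⟩
    · rw [hsqrt2]
      have : b * (B / Real.sin θ₁) = u / Real.sin θ₁ := by rw [hu']; ring
      rw [this, ← key1]
      rw [mul_comm, mul_div_assoc, div_self hsin₁pos.ne', mul_one]
    · rw [hsqrt1]
      have : a * (A / Real.sin θ₂) = v / Real.sin θ₂ := by rw [hv']; ring
      rw [this, ← key2]
      rw [mul_div_assoc, div_self hsin₂pos.ne', mul_one]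
    · field_simp
    · field_simp
end

section
/- Fix real numbers h, η, ρ with η > 0 and 0 ≤ ρ < 1. The function F(P₁, P₂) = (1/2)·log(2πe·(1 - ρ² + h²P₂ + P₁(ρ - η)²/(P₁ + η²))) is concave on the quadrant {(P₁, P₂) : P₁ ≥ 0, P₂ ≥ 0}, and is nondecreasing in P₁ for each fixed P₂ ≥ 0 and nondecreasing in P₂ for each fixed P₁ ≥ 0. -/
/-!
The argument of the logarithm is the Gaussian conditional variance
`1 - ρ² + h²P₂ + P₁(ρ - η)²/(P₁ + η²)`. It is affine in `P₂` plus a saturation curve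
`x ↦ c x/(x + e)` in `P₁`, which is nondecreasing and concave for `c ≥ 0`, `e > 0`; it
stays positive because `ρ² < 1`. The Gaussian entropy `v ↦ ½ log(2πe v)` is concave and
nondecreasing on `(0, ∞)`, so composing it with this positive concave map preserves concavity
and monotonicity.
-/

open Real Set

theorem ConcaveOn.comp_of_mapsTo {𝕜 E β γ : Type*} [Semiring 𝕜] [PartialOrder 𝕜]
    [AddCommMonoid E] [AddCommMonoid β] [PartialOrder β] [AddCommMonoid γ]
    [PartialOrder γ] [SMul 𝕜 E] [Module 𝕜 β] [Module 𝕜 γ] {s : Set E} {t : Set β}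
    {f : E → β} {g : β → γ} (hg : ConcaveOn 𝕜 t g) (hf : ConcaveOn 𝕜 s f)
    (hg' : MonotoneOn g t) (hst : MapsTo f s t) :
    ConcaveOn 𝕜 s (g ∘ f) := by
  refine ⟨hf.1, fun x hx y hy a b ha hb hab => ?_⟩
  have hcomb : a • f x + b • f y ∈ t := hg.1 (hst hx) (hst hy) ha hb hab
  calc a • g (f x) + b • g (f y) ≤ g (a • f x + b • f y) :=
        hg.2 (hst hx) (hst hy) ha hb hab
    _ ≤ g (f (a • x + b • y)) :=
      hg' hcomb (hst (hf.1 hx hy ha hb hab)) (hf.2 hx hy ha hb hab)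

section Saturation

variable {c e : ℝ}

theorem monotoneOn_saturation (hc : 0 ≤ c) (he : 0 < e) :
    MonotoneOn (fun x : ℝ => x * c / (x + e)) (Ici 0) := by
  intro x (hx : 0 ≤ x) y (hy : 0 ≤ y) hxy
  rw [div_le_div_iff₀ (by linarith) (by linarith)]
  nlinarith [mul_nonneg (mul_nonneg hc he.le) (sub_nonneg.2 hxy)]

theorem concaveOn_saturation (hc : 0 ≤ c) (he : 0 < e) :
    ConcaveOn ℝ (Ici 0) fun x : ℝ => x * c / (x + e) := by
  refine ⟨convex_Ici 0, fun x (hx : 0 ≤ x) y (hy : 0 ≤ y) a b ha hb hab => ?_⟩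
  obtain rfl : b = 1 - a := by linarith
  have gap : (a * x + (1 - a) * y) * c / ((a * x + (1 - a) * y) + e) -
      (a * (x * c / (x + e)) + (1 - a) * (y * c / (y + e))) =
      c * a * (1 - a) * e * (x - y) ^ 2 / ((x + e) * (y + e) * ((a * x + (1 - a) * y) + e)) := by
    field_simp
    ring
  have hgap : 0 ≤ c * a * (1 - a) * e * (x - y) ^ 2 /
      ((x + e) * (y + e) * ((a * x + (1 - a) * y) + e)) := by
    have : 0 ≤ x + e := by linarith
    have : 0 ≤ y + e := by linarith
    positivity
  simp only [smul_eq_mul]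
  linarith

end Saturation

/-- The conditional variance of `Y₁G` given `S₁G`, as a function of `(P₁, P₂)`. -/
noncomputable def condVar (h η ρ : ℝ) (p : ℝ × ℝ) : ℝ :=
  1 - ρ ^ 2 + h ^ 2 * p.2 + p.1 * (ρ - η) ^ 2 / (p.1 + η ^ 2)

section CondVar

variable {h η ρ : ℝ}

theorem condVar_pos (hρ : ρ ^ 2 < 1) {p : ℝ × ℝ} (hp : 0 ≤ p.1 ∧ 0 ≤ p.2) :
    0 < condVar h η ρ p := by
  obtain ⟨hp₁, hp₂⟩ := hp
  have : 0 ≤ p.1 * (ρ - η) ^ 2 / (p.1 + η ^ 2) := by positivity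
  have : 0 ≤ h ^ 2 * p.2 := by positivity
  unfold condVar
  linarith

theorem concaveOn_condVar (hη : η ≠ 0) :
    ConcaveOn ℝ {p : ℝ × ℝ | 0 ≤ p.1 ∧ 0 ≤ p.2} (condVar h η ρ) := by
  have hquad : Convex ℝ {p : ℝ × ℝ | 0 ≤ p.1 ∧ 0 ≤ p.2} :=
    (convex_Ici 0).prod (convex_Ici 0)
  have haffine : ConcaveOn ℝ {p : ℝ × ℝ | 0 ≤ p.1 ∧ 0 ≤ p.2}
      fun p => 1 - ρ ^ 2 + h ^ 2 * p.2 :=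
    (concaveOn_const _ hquad).add ((h ^ 2 • LinearMap.snd ℝ ℝ ℝ).concaveOn hquad)
  have hsat : ConcaveOn ℝ {p : ℝ × ℝ | 0 ≤ p.1 ∧ 0 ≤ p.2}
      fun p => p.1 * (ρ - η) ^ 2 / (p.1 + η ^ 2) :=
    ((concaveOn_saturation (sq_nonneg _) (by positivity)).comp_linearMap
      (LinearMap.fst ℝ ℝ ℝ)).subset (fun _ hp => hp.1) hquad
  exact haffine.add hsat

theorem monotoneOn_condVar_fst (hη : η ≠ 0) (P₂ : ℝ) :
    MonotoneOn (fun P₁ => condVar h η ρ (P₁, P₂)) (Ici 0) := fun _ hx _ hy hxy => by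
  have := monotoneOn_saturation (sq_nonneg (ρ - η)) (by positivity : 0 < η ^ 2) hx hy hxy
  unfold condVar
  dsimp only at this ⊢
  linarith

theorem monotone_condVar_snd (P₁ : ℝ) : Monotone fun P₂ => condVar h η ρ (P₁, P₂) :=
  fun _ _ hxy => by
  have := mul_le_mul_of_nonneg_left hxy (sq_nonneg h)
  unfold condVar
  dsimp only
  linarith

end CondVar

noncomputable def gaussianEntropy (v : ℝ) : ℝ := 1 / 2 * log (2 * π * exp 1 * v)

theorem monotoneOn_gaussianEntropy : MonotoneOn gaussianEntropy (Ioi 0) := by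
  intro x (hx : 0 < x) y _ hxy
  unfold gaussianEntropy
  gcongr

theorem concaveOn_gaussianEntropy : ConcaveOn ℝ (Ioi 0) gaussianEntropy := by
  have hscale : ConcaveOn ℝ (Ioi 0) fun v : ℝ => 2 * π * exp 1 * v :=
    ((2 * π * exp 1) • LinearMap.id).concaveOn (convex_Ioi 0)
  have hlog : ConcaveOn ℝ (Ioi 0) fun v : ℝ => log (2 * π * exp 1 * v) :=
    strictConcaveOn_log_Ioi.concaveOn.comp_of_mapsTo hscale
      (fun _ hx _ _ hxy => log_le_log hx hxy)
      fun _ hv => mul_pos (by positivity) (mem_Ioi.1 hv)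
  exact hlog.smul (by norm_num : (0 : ℝ) ≤ 1 / 2)

/-- The conditional differential entropy
`F(P₁,P₂) = ½·log(2πe·(1 - ρ² + h²P₂ + P₁(ρ-η)²/(P₁+η²)))` is concave on the
nonnegative quadrant and nondecreasing in each of `P₁` and `P₂` separately. -/
theorem cond_entropy_concave_monotone (h η ρ : ℝ) (hη : 0 < η) (hρ : 0 ≤ ρ) (hρ1 : ρ < 1) :
    ConcaveOn ℝ {p : ℝ × ℝ | 0 ≤ p.1 ∧ 0 ≤ p.2}
      (fun p : ℝ × ℝ => (1 / 2) * Real.log (2 * Real.pi * Real.exp 1 *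
        (1 - ρ ^ 2 + h ^ 2 * p.2 + p.1 * (ρ - η) ^ 2 / (p.1 + η ^ 2)))) ∧
    (∀ P₂ : ℝ, 0 ≤ P₂ → MonotoneOn
      (fun P₁ : ℝ => (1 / 2) * Real.log (2 * Real.pi * Real.exp 1 *
        (1 - ρ ^ 2 + h ^ 2 * P₂ + P₁ * (ρ - η) ^ 2 / (P₁ + η ^ 2)))) (Set.Ici 0)) ∧
    (∀ P₁ : ℝ, 0 ≤ P₁ → MonotoneOn
      (fun P₂ : ℝ => (1 / 2) * Real.log (2 * Real.pi * Real.exp 1 *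
        (1 - ρ ^ 2 + h ^ 2 * P₂ + P₁ * (ρ - η) ^ 2 / (P₁ + η ^ 2)))) (Set.Ici 0)) := by
  have hρ2 : ρ ^ 2 < 1 := by nlinarith
  have hpos : MapsTo (condVar h η ρ) {p | 0 ≤ p.1 ∧ 0 ≤ p.2} (Ioi 0) :=
    fun _ hp => condVar_pos hρ2 hp
  refine ⟨?_, fun P₂ hP₂ => ?_, fun P₁ hP₁ => ?_⟩
  · exact concaveOn_gaussianEntropy.comp_of_mapsTo (concaveOn_condVar hη.ne')
      monotoneOn_gaussianEntropy hpos
  · exact monotoneOn_gaussianEntropy.comp (monotoneOn_condVar_fst hη.ne' P₂)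
      fun P₁ hP₁ => @hpos (P₁, P₂) ⟨hP₁, hP₂⟩
  · exact monotoneOn_gaussianEntropy.comp ((monotone_condVar_snd P₁).monotoneOn _)
      fun P₂ hP₂ => @hpos (P₁, P₂) ⟨hP₁, hP₂⟩
end
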